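/- arXiv:2204.00740 — 4 statements merged into one kernel-verified Lean document; each statement's English description precedes it below -/
import Mathlib

section
/- (Invariance of path development under time-reparametrisation, discrete form.) Let M : ℝ^d →ₗ[ℝ] Matrix (Fin m) (Fin m) ℝ be linear, let x = (x_0, …, x_N) be a finite sequence in ℝ^d, and let λ : Fin (K+1) → Fin (N+1) be monotone nondecreasing and surjective. Then the discrete path development of the reparametrised sequence x ∘ λ = (x_{λ(0)}, …, x_{λ(K)}) equals that of x: D_M(x ∘ λ) = D_M(x). -/
/-!
The development is an ordered product of factors `F (x i) (x (i+1))` with `F a a = 1`.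
A monotone surjection `lam` of `Fin`s never skips a value, so each step of `x ∘ lam` either
stays put, contributing `exp (M 0) = 1`, or advances by one, contributing the next factor of
the development of `x`. Read along `ℕ`, this is an induction on the number of steps.
-/

/-- The discrete path development of the sequence `x 0, …, x N` (indexed by `Fin (N+1)`)
under the linear map `M`: the ordered product
`exp (M (x 1 - x 0)) * ⋯ * exp (M (x N - x (N-1)))`. -/
noncomputable def discreteDevFin (d m N : ℕ)
    (M : (Fin d → ℝ) →ₗ[ℝ] Matrix (Fin m) (Fin m) ℝ) (x : Fin (N + 1) → Fin d → ℝ) :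
    Matrix (Fin m) (Fin m) ℝ :=
  ((List.finRange N).map
    (fun i => NormedSpace.exp (M (x i.succ - x i.castSucc)))).prod

section Order

variable {α β : Type*}

theorem Monotone.map_bot_of_surjective [Preorder α] [OrderBot α] [PartialOrder β] [OrderBot β]
    {f : α → β} (hf : Monotone f) (hs : Function.Surjective f) : f ⊥ = ⊥ := by
  obtain ⟨a, ha⟩ := hs ⊥
  exact le_bot_iff.mp (ha ▸ hf bot_le)

theorem Monotone.map_top_of_surjective [Preorder α] [OrderTop α] [PartialOrder β] [OrderTop β]
    {f : α → β} (hf : Monotone f) (hs : Function.Surjective f) : f ⊤ = ⊤ :=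
  hf.dual.map_bot_of_surjective hs

theorem Monotone.wcovBy_of_surjective [LinearOrder α] [Preorder β] {f : α → β}
    (hf : Monotone f) (hs : Function.Surjective f) {a b : α} (hab : a ⋖ b) : f a ⩿ f b := by
  refine ⟨hf hab.le, fun c hac hcb => ?_⟩
  obtain ⟨d, rfl⟩ := hs c
  rcases le_or_gt d a with hda | had
  · exact (hf hda).not_gt hac
  · exact (hf (hab.ge_of_gt had)).not_gt hcb

theorem Fin.castSucc_covBy_succ {n : ℕ} (i : Fin n) : i.castSucc ⋖ i.succ :=
  Fin.covBy_iff.2 (by simp)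

theorem Fin.val_succ_eq_or_of_monotone_surjective {K N : ℕ} {lam : Fin (K + 1) → Fin (N + 1)}
    (hmono : Monotone lam) (hsurj : Function.Surjective lam) (i : Fin K) :
    (lam i.succ : ℕ) = lam i.castSucc ∨ (lam i.succ : ℕ) = lam i.castSucc + 1 := by
  rcases wcovBy_iff_eq_or_covBy.1 (hmono.wcovBy_of_surjective hsurj i.castSucc_covBy_succ)
    with h | h
  · exact .inl (congrArg Fin.val h).symm
  · exact .inr (Nat.covBy_iff_add_one_eq.1 (Fin.covBy_iff.1 h)).symm

end Order

section ChainProd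

variable {α X : Type*} [Monoid α]

def chainProd (F : X → X → α) (y : ℕ → X) (n : ℕ) : α :=
  ((List.range n).map fun i => F (y i) (y (i + 1))).prod

theorem chainProd_succ (F : X → X → α) (y : ℕ → X) (n : ℕ) :
    chainProd F y (n + 1) = chainProd F y n * F (y n) (y (n + 1)) :=
  List.prod_range_succ _ n

theorem chainProd_comp {F : X → X → α} (hF : ∀ a, F a a = 1) (y : ℕ → X) {lam : ℕ → ℕ}
    (h0 : lam 0 = 0) :
    ∀ {K : ℕ}, (∀ i < K, lam (i + 1) = lam i ∨ lam (i + 1) = lam i + 1) →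
      chainProd F (y ∘ lam) K = chainProd F y (lam K)
  | 0, _ => by simp [chainProd, h0]
  | K + 1, hstep => by
    rw [chainProd_succ, chainProd_comp hF y h0 fun i hi => hstep i (by omega)]
    rcases hstep K K.lt_succ_self with h | h
    · simp [h, hF]
    · rw [h, chainProd_succ, Function.comp_apply, Function.comp_apply, h]

end ChainProd

-- `(j : Fin (N + 1))` wraps around modulo `N + 1`, but only `j ≤ N` is read.
open Fin.NatCast in
theorem discreteDevFin_eq_chainProd (d m N : ℕ)
    (M : (Fin d → ℝ) →ₗ[ℝ] Matrix (Fin m) (Fin m) ℝ) (x : Fin (N + 1) → Fin d → ℝ) :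
    discreteDevFin d m N M x =
      chainProd (fun a b => NormedSpace.exp (M (b - a))) (fun j => x j) N := by
  rw [discreteDevFin, chainProd, ← List.map_coe_finRange_eq_range, List.map_map]
  congr 2
  funext i
  simp

/-- Invariance of the discrete path development under time-reparametrisation: if
`lam : Fin (K+1) → Fin (N+1)` is monotone nondecreasing and surjective, then the
development of the reparametrised sequence `x ∘ lam` equals that of `x`. -/
theorem statement3 (d m N K : ℕ) (M : (Fin d → ℝ) →ₗ[ℝ] Matrix (Fin m) (Fin m) ℝ)
    (x : Fin (N + 1) → Fin d → ℝ) (lam : Fin (K + 1) → Fin (N + 1))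
    (hmono : Monotone lam) (hsurj : Function.Surjective lam) :
    discreteDevFin d m K M (x ∘ lam) = discreteDevFin d m N M x := by
  open Fin.NatCast in
  set lam' : ℕ → ℕ := fun i => lam i
  have h0 : lam' 0 = 0 := by
    have : lam 0 = 0 := hmono.map_bot_of_surjective hsurj
    simp [lam', this]
  have hK : lam' K = N := by
    have : lam (Fin.last K) = Fin.last N := hmono.map_top_of_surjective hsurj
    simp [lam', Fin.natCast_eq_last, this]
  have hstep : ∀ i < K, lam' (i + 1) = lam' i ∨ lam' (i + 1) = lam' i + 1 := fun i hi => by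
    have hi₀ : ((i : ℕ) : Fin (K + 1)) = (⟨i, hi⟩ : Fin K).castSucc :=
      Fin.ext (Fin.val_cast_of_lt (by omega))
    have hi₁ : ((i + 1 : ℕ) : Fin (K + 1)) = (⟨i, hi⟩ : Fin K).succ :=
      Fin.ext (Fin.val_cast_of_lt (by omega))
    simp only [lam', hi₀, hi₁]
    exact Fin.val_succ_eq_or_of_monotone_surjective hmono hsurj _
  have hcomp : (fun j : ℕ => (x ∘ lam) j) = (fun j : ℕ => x j) ∘ lam' := by
    funext j
    simp [lam']
  rw [discreteDevFin_eq_chainProd, discreteDevFin_eq_chainProd, hcomp,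
    chainProd_comp (fun a => by simp) _ h0 hstep, hK]
end

section
/- (Gradient of a function composed with the matrix exponential.) Let f : Matrix (Fin m) (Fin m) ℝ → ℝ be differentiable at exp(A), and let G ∈ Matrix (Fin m) (Fin m) ℝ be its Frobenius gradient at exp(A), i.e. fderiv ℝ f (exp A) (Y) = trace(Gᵀ * Y) for all Y. Then f ∘ exp is differentiable at A and its Frobenius gradient at A is (d exp)_{Aᵀ}(G): for all ξ ∈ Matrix (Fin m) (Fin m) ℝ, fderiv ℝ (f ∘ exp) A (ξ) = trace(((d exp)_{Aᵀ}(G))ᵀ * ξ). In symbols, ∇(f ∘ exp)(A) = (d exp)_{Aᵀ}(∇f(exp A)). -/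
/-!
The derivative of `exp` at `x` is the series `ξ ↦ ∑ₙ (1/n!) ∑_{i+j=n-1} xʲ ξ xⁱ`. By cyclicity of
the trace each term is symmetric for the pairing `(P, ξ) ↦ tr (P ξ)`, so
`tr (P · (d exp)_A ξ) = tr ((d exp)_A P · ξ)`; and since `exp` commutes with transposition,
`(d exp)_{Aᵀ} G = ((d exp)_A Gᵀ)ᵀ`. With `P = Gᵀ` the chain rule gives the gradient.
-/

open scoped Matrix

attribute [local instance] Matrix.linftyOpNormedAddCommGroup Matrix.linftyOpNormedRing
  Matrix.linftyOpNormedAlgebra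

open scoped RightActions Nat
open Finset NormedSpace

section NormedRing

variable {R : Type*} [NormedRing R]

theorem norm_pow_mul_le (x y : R) (n : ℕ) : ‖x ^ n * y‖ ≤ ‖x‖ ^ n * ‖y‖ := by
  induction n with
  | zero => simp
  | succ n ih =>
    calc ‖x ^ (n + 1) * y‖ = ‖x * (x ^ n * y)‖ := by rw [pow_succ', mul_assoc]
      _ ≤ ‖x‖ * (‖x‖ ^ n * ‖y‖) := norm_mul_le_of_le le_rfl ih
      _ = ‖x‖ ^ (n + 1) * ‖y‖ := by ring

theorem norm_mul_pow_le (x y : R) (n : ℕ) : ‖y * x ^ n‖ ≤ ‖y‖ * ‖x‖ ^ n := by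
  induction n with
  | zero => simp
  | succ n ih =>
    calc ‖y * x ^ (n + 1)‖ = ‖(y * x ^ n) * x‖ := by rw [pow_succ, mul_assoc]
      _ ≤ (‖y‖ * ‖x‖ ^ n) * ‖x‖ := norm_mul_le_of_le ih le_rfl
      _ = ‖y‖ * ‖x‖ ^ (n + 1) := by ring

end NormedRing

theorem summable_inv_factorial_mul_nat_mul_pow_pred (r : ℝ) :
    Summable fun n : ℕ => (n ! : ℝ)⁻¹ * (n * r ^ (n - 1)) := by
  rw [← summable_nat_add_iff 1]
  refine (Real.summable_pow_div_factorial r).congr fun n => ?_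
  rw [Nat.add_sub_cancel, Nat.factorial_succ]
  push_cast
  field_simp

section ExpFDeriv

variable (𝕂 : Type*) {𝔸 : Type*} [RCLike 𝕂] [NormedRing 𝔸] [NormedAlgebra 𝕂 𝔸]

-- The derivative of `(· ^ n)` at `x`, in the form given by `hasFDerivAt_pow'`.
noncomputable def powFDeriv (n : ℕ) (x : 𝔸) : 𝔸 →L[𝕂] 𝔸 :=
  ∑ i ∈ range n, x ^ (n.pred - i) •> ContinuousLinearMap.id 𝕂 𝔸 <• x ^ i

theorem powFDeriv_apply (n : ℕ) (x h : 𝔸) :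
    powFDeriv 𝕂 n x h = ∑ i ∈ range n, x ^ (n.pred - i) * h * x ^ i := by
  simp [powFDeriv]

variable {𝕂}

theorem norm_powFDeriv_le (n : ℕ) {x : 𝔸} {r : ℝ} (hx : ‖x‖ ≤ r) :
    ‖powFDeriv 𝕂 n x‖ ≤ n * r ^ (n - 1) := by
  have hr : 0 ≤ r := (norm_nonneg x).trans hx
  refine ContinuousLinearMap.opNorm_le_bound _ (by positivity) fun h => ?_
  rw [powFDeriv_apply]
  calc ‖∑ i ∈ range n, x ^ (n.pred - i) * h * x ^ i‖
      ≤ ∑ i ∈ range n, ‖x‖ ^ (n.pred - i) * ‖h‖ * ‖x‖ ^ i := by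
        refine norm_sum_le_of_le _ fun i _ => ?_
        exact (norm_mul_pow_le _ _ _).trans
          (mul_le_mul_of_nonneg_right (norm_pow_mul_le _ _ _) (by positivity))
    _ ≤ ∑ i ∈ range n, r ^ (n - 1) * ‖h‖ := by
        refine sum_le_sum fun i hi => ?_
        have hi : i ≤ n - 1 := Nat.le_pred_of_lt (mem_range.mp hi)
        calc ‖x‖ ^ (n.pred - i) * ‖h‖ * ‖x‖ ^ i = ‖x‖ ^ (n - 1) * ‖h‖ := by
              rw [mul_right_comm, ← pow_add, Nat.pred_eq_sub_one, Nat.sub_add_cancel hi]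
          _ ≤ r ^ (n - 1) * ‖h‖ := by gcongr
    _ = n * r ^ (n - 1) * ‖h‖ := by simp [mul_assoc]

variable (𝕂) in
noncomputable def expFDeriv (x : 𝔸) : 𝔸 →L[𝕂] 𝔸 :=
  ∑' n : ℕ, (n !⁻¹ : 𝕂) • powFDeriv 𝕂 n x

theorem norm_inv_factorial_smul_powFDeriv_le (n : ℕ) {x : 𝔸} {r : ℝ} (hx : ‖x‖ ≤ r) :
    ‖(n !⁻¹ : 𝕂) • powFDeriv 𝕂 n x‖ ≤ (n ! : ℝ)⁻¹ * (n * r ^ (n - 1)) := by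
  rw [norm_smul, norm_inv, RCLike.norm_natCast]
  exact mul_le_mul_of_nonneg_left (norm_powFDeriv_le n hx) (by positivity)

theorem map_mul_powFDeriv_comm {F : Type*} [AddCommMonoid F] (τ : 𝔸 →+ F)
    (hτ : ∀ a b, τ (a * b) = τ (b * a)) (n : ℕ) (x p h : 𝔸) :
    τ (p * powFDeriv 𝕂 n x h) = τ (powFDeriv 𝕂 n x p * h) := by
  simp only [powFDeriv_apply, mul_sum, sum_mul, map_sum, Nat.pred_eq_sub_one]
  conv_rhs => rw [← sum_range_reflect]
  refine sum_congr rfl fun i hi => ?_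
  have hi : n - 1 - (n - 1 - i) = i := by have := mem_range.mp hi; omega
  have := hτ (p * x ^ (n - 1 - i) * h) (x ^ i)
  simp only [hi, mul_assoc] at this ⊢
  exact this

variable [CompleteSpace 𝔸]

theorem summable_inv_factorial_smul_powFDeriv (x : 𝔸) :
    Summable fun n : ℕ => (n !⁻¹ : 𝕂) • powFDeriv 𝕂 n x :=
  .of_norm_bounded (summable_inv_factorial_mul_nat_mul_pow_pred ‖x‖)
    fun n => norm_inv_factorial_smul_powFDeriv_le n le_rfl

theorem hasFDerivAt_exp_expFDeriv (x : 𝔸) : HasFDerivAt exp (expFDeriv 𝕂 x) x := by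
  -- a real structure makes balls convex, hence preconnected
  let : NormedSpace ℝ 𝔸 := .restrictScalars ℝ 𝕂 𝔸
  rw [exp_eq_tsum 𝕂]
  exact hasFDerivAt_tsum_of_isPreconnected
    (summable_inv_factorial_mul_nat_mul_pow_pred (‖x‖ + 1)) Metric.isOpen_ball
    (convex_ball 0 _).isPreconnected
    (fun n y _ => (hasFDerivAt_pow' (𝕜 := 𝕂) n).const_smul (n !⁻¹ : 𝕂))
    (fun n y hy => norm_inv_factorial_smul_powFDeriv_le n (mem_ball_zero_iff.mp hy).le)
    (Metric.mem_ball_self (by positivity)) (expSeries_summable' 0)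
    (mem_ball_zero_iff.mpr (lt_add_one _))

theorem map_mul_expFDeriv_comm {F : Type*} [NormedAddCommGroup F] [NormedSpace 𝕂 F]
    (τ : 𝔸 →L[𝕂] F) (hτ : ∀ a b, τ (a * b) = τ (b * a)) (x p h : 𝔸) :
    τ (p * expFDeriv 𝕂 x h) = τ (expFDeriv 𝕂 x p * h) := by
  let Φ : (𝔸 →L[𝕂] 𝔸) →L[𝕂] F :=
    (τ.comp (ContinuousLinearMap.mul 𝕂 𝔸 p)).comp (ContinuousLinearMap.apply 𝕂 𝔸 h)
  let Ψ : (𝔸 →L[𝕂] 𝔸) →L[𝕂] F :=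
    (τ.comp ((ContinuousLinearMap.mul 𝕂 𝔸).flip h)).comp (ContinuousLinearMap.apply 𝕂 𝔸 p)
  change Φ (expFDeriv 𝕂 x) = Ψ (expFDeriv 𝕂 x)
  rw [expFDeriv, Φ.map_tsum (summable_inv_factorial_smul_powFDeriv x),
    Ψ.map_tsum (summable_inv_factorial_smul_powFDeriv x)]
  refine tsum_congr fun n => ?_
  rw [Φ.map_smul, Ψ.map_smul]
  exact congrArg _ (map_mul_powFDeriv_comm τ.toLinearMap.toAddMonoidHom hτ n x p h)

end ExpFDeriv

namespace Matrix

variable {𝕂 n : Type*} [RCLike 𝕂] [Fintype n] [DecidableEq n]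

theorem trace_mul_expFDeriv_comm (A P ξ : Matrix n n 𝕂) :
    (P * expFDeriv 𝕂 A ξ).trace = (expFDeriv 𝕂 A P * ξ).trace :=
  map_mul_expFDeriv_comm (traceLinearMap n 𝕂 𝕂).toContinuousLinearMap trace_mul_comm A P ξ

theorem fderiv_exp_apply (A ξ : Matrix n n 𝕂) : fderiv 𝕂 exp A ξ = expFDeriv 𝕂 A ξ :=
  congr($((hasFDerivAt_exp_expFDeriv A).fderiv) ξ)

theorem expFDeriv_transpose (A G : Matrix n n 𝕂) :
    expFDeriv 𝕂 Aᵀ G = (expFDeriv 𝕂 A Gᵀ)ᵀ := by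
  let T : Matrix n n 𝕂 ≃L[𝕂] Matrix n n 𝕂 :=
    (transposeLinearEquiv n n 𝕂 𝕂).toContinuousLinearEquiv
  have hT : HasFDerivAt exp (_ : Matrix n n 𝕂 →L[𝕂] Matrix n n 𝕂) Aᵀ :=
    T.hasFDerivAt.comp _ ((hasFDerivAt_exp_expFDeriv A).comp Aᵀ T.hasFDerivAt)
    |>.congr_of_eventuallyEq (.of_forall fun X => by
      show exp X = (exp Xᵀ)ᵀ
      rw [exp_transpose, transpose_transpose])
  exact congr($((hasFDerivAt_exp_expFDeriv Aᵀ).unique hT) G)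

end Matrix

/-- Gradient of a function composed with the matrix exponential: if `G` is the Frobenius
gradient of `f` at `exp A`, then `f ∘ exp` is differentiable at `A` and its Frobenius
gradient at `A` is `(d exp)_{Aᵀ} G`, i.e. `∇(f ∘ exp)(A) = (d exp)_{Aᵀ}(∇f(exp A))`. -/
theorem statement9 (m : ℕ) (f : Matrix (Fin m) (Fin m) ℝ → ℝ)
    (A G : Matrix (Fin m) (Fin m) ℝ)
    (hf : DifferentiableAt ℝ f (NormedSpace.exp A))
    (hG : ∀ Y : Matrix (Fin m) (Fin m) ℝ,
      fderiv ℝ f (NormedSpace.exp A) Y = (Gᵀ * Y).trace) :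
    DifferentiableAt ℝ (f ∘ NormedSpace.exp) A ∧
      ∀ ξ : Matrix (Fin m) (Fin m) ℝ,
        fderiv ℝ (f ∘ NormedSpace.exp) A ξ =
          ((fderiv ℝ (NormedSpace.exp) Aᵀ G)ᵀ * ξ).trace := by
  have hcomp := hf.hasFDerivAt.comp A (hasFDerivAt_exp_expFDeriv A)
  refine ⟨hcomp.differentiableAt, fun ξ => ?_⟩
  -- `fderiv` in the statement uses the product topology on matrices, `hcomp` the norm topology:
  -- they agree only up to unfolding, so the chain rule is transferred by `congr`.
  have hchain : fderiv ℝ (f ∘ exp) A ξ = fderiv ℝ f (exp A) (expFDeriv ℝ A ξ) :=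
    congr($(hcomp.fderiv) ξ)
  rw [hchain, hG, Matrix.fderiv_exp_apply, Matrix.expFDeriv_transpose, Matrix.transpose_transpose]
  exact Matrix.trace_mul_expFDeriv_comm A Gᵀ ξ
end

section
/- (Series formula for the differential of the matrix exponential.) For all A, X ∈ Matrix (Fin m) (Fin m) ℝ, the Fréchet derivative of the matrix exponential satisfies (d exp)_A(X) = Σ_{k=0}^∞ (1/(k+1)!) • ((−ad(A))^k)(exp(A) * X), where ad(A)Y := A*Y − Y*A is the adjoint action, (−ad(A))^k denotes its k-fold iterate as a linear map on matrices, and the series converges (as a tsum) in Matrix (Fin m) (Fin m) ℝ. -/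
attribute [local instance] Matrix.linftyOpNormedAddCommGroup Matrix.linftyOpNormedRing
  Matrix.linftyOpNormedAlgebra

/-- The adjoint action `ad A : Y ↦ A*Y - Y*A`, as a linear endomorphism of matrices. -/
noncomputable def adAction (m : ℕ) (A : Matrix (Fin m) (Fin m) ℝ) :
    Matrix (Fin m) (Fin m) ℝ →ₗ[ℝ] Matrix (Fin m) (Fin m) ℝ :=
  LinearMap.mulLeft ℝ A - LinearMap.mulRight ℝ A

/-!
Let `L` and `R` be left and right multiplication by `x`; they commute, and `D := R - L = -ad x`.
Differentiating the exponential series termwise gives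
`(d exp)_x = ∑ₙ (1/(n+1)!) ∑_{i+j=n} Lⁱ Rʲ`.
Substituting `R = L + D`, the hockey-stick identity
`∑_{i+j=n} Lⁱ (L + D)ʲ = ∑_{k+j=n} C(n+1, k+1) Dᵏ Lʲ` turns this series into the Cauchy product
`(∑ₖ Dᵏ/(k+1)!) · exp L`, and `exp L` is left multiplication by `exp x`.
-/

open NormedSpace Finset
open scoped Nat

theorem Commute.sum_antidiagonal_pow_mul_add_pow {R : Type*} [Semiring R] {a d : R}
    (h : Commute a d) (n : ℕ) :
    ∑ p ∈ antidiagonal n, a ^ p.1 * (a + d) ^ p.2 =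
      ∑ p ∈ antidiagonal n, (n + 1).choose (p.1 + 1) • (d ^ p.1 * a ^ p.2) := by
  induction n with
  | zero => simp
  | succ n ih =>
    have hbinom : (a + d) ^ (n + 1) =
        d ^ (n + 1) + ∑ p ∈ antidiagonal n, (n + 1).choose p.1 • (d ^ p.1 * a ^ (p.2 + 1)) := by
      rw [add_comm, h.symm.add_pow', Nat.sum_antidiagonal_succ']
      simp
    have hpascal : ∑ p ∈ antidiagonal n, (n + 2).choose (p.1 + 1) • (d ^ p.1 * a ^ (p.2 + 1)) =
        ∑ p ∈ antidiagonal n, (n + 1).choose p.1 • (d ^ p.1 * a ^ (p.2 + 1)) +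
          a * ∑ p ∈ antidiagonal n, (n + 1).choose (p.1 + 1) • (d ^ p.1 * a ^ p.2) := by
      simp only [Nat.choose_succ_succ (n + 1), add_smul, sum_add_distrib, mul_sum,
        mul_smul_comm, ← mul_assoc, (h.pow_right _).eq, pow_succ']
    have hleft : ∑ p ∈ antidiagonal n, a ^ (p.1 + 1) * (a + d) ^ p.2 =
        a * ∑ p ∈ antidiagonal n, a ^ p.1 * (a + d) ^ p.2 := by
      simp only [pow_succ', mul_assoc, mul_sum]
    rw [Nat.sum_antidiagonal_succ, Nat.sum_antidiagonal_succ', hpascal, hleft, ih, hbinom]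
    simp [add_assoc]

theorem Nat.inv_factorial_mul_choose_succ (𝕂 : Type*) [Field 𝕂] [CharZero 𝕂] (k j : ℕ) :
    ((k + j + 1)! : 𝕂)⁻¹ * ((k + j + 1).choose (k + 1) : 𝕂) =
      ((k + 1)! : 𝕂)⁻¹ * (j ! : 𝕂)⁻¹ := by
  have : ((k + 1 + j)! : 𝕂) ≠ 0 := Nat.cast_ne_zero.mpr (Nat.factorial_ne_zero _)
  rw [show k + j + 1 = (k + 1) + j by ring, Nat.cast_add_choose]
  field_simp

section BanachAlgebra

variable {𝕂 𝔸 : Type*} [RCLike 𝕂] [NormedRing 𝔸] [NormedAlgebra 𝕂 𝔸]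

theorem summable_norm_inv_factorial_succ_smul_pow (x : 𝔸) :
    Summable fun k => ‖((k + 1)! : 𝕂)⁻¹ • x ^ k‖ := by
  refine (norm_expSeries_summable' (𝕂 := 𝕂) x).of_nonneg_of_le (fun _ => norm_nonneg _)
    fun k => ?_
  simp only [norm_smul, norm_inv, RCLike.norm_natCast]
  gcongr
  exact k.le_succ

variable [CompleteSpace 𝔸]

theorem NormedSpace.exp_eq_one_add_tsum (x : 𝔸) :
    exp x = 1 + ∑' n, ((n + 1)! : 𝕂)⁻¹ • x ^ (n + 1) := by
  rw [congrFun (exp_eq_tsum 𝕂) x, (expSeries_summable' x).tsum_eq_zero_add]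
  simp

/-- For commuting `a`, `d` this is the power-series form of
`(exp (a + d) - exp a) / d = ((exp d - 1) / d) * exp a`. -/
theorem Commute.tsum_smul_sum_antidiagonal_pow_mul_add_pow {a d : 𝔸} (h : Commute a d) :
    ∑' n, ((n + 1)! : 𝕂)⁻¹ • ∑ p ∈ antidiagonal n, a ^ p.1 * (a + d) ^ p.2 =
      (∑' k, ((k + 1)! : 𝕂)⁻¹ • d ^ k) * NormedSpace.exp a := by
  rw [exp_eq_tsum 𝕂, tsum_mul_tsum_eq_tsum_sum_antidiagonal_of_summable_norm
    (summable_norm_inv_factorial_succ_smul_pow d) (norm_expSeries_summable' a)]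
  refine tsum_congr fun n => ?_
  rw [h.sum_antidiagonal_pow_mul_add_pow, smul_sum]
  refine sum_congr rfl fun p hp => ?_
  obtain rfl : p.1 + p.2 = n := mem_antidiagonal.mp hp
  rw [smul_mul_smul_comm, ← Nat.cast_smul_eq_nsmul 𝕂, smul_smul,
    Nat.inv_factorial_mul_choose_succ]

end BanachAlgebra

section Derivative

open ContinuousLinearMap (mul mulLeftRight)

variable {𝕂 𝔸 : Type*} [RCLike 𝕂] [NormedRing 𝔸] [NormedAlgebra 𝕂 𝔸]

theorem hasFDerivAt_pow_succ_eq_sum_mulLeftRight (n : ℕ) (x : 𝔸) :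
    HasFDerivAt (fun y : 𝔸 => y ^ (n + 1))
      (∑ p ∈ antidiagonal n, mulLeftRight 𝕂 𝔸 (x ^ p.1) (x ^ p.2)) x := by
  refine (hasFDerivAt_pow' (n + 1)).congr_fderiv ?_
  rw [← Nat.sum_antidiagonal_swap, Nat.sum_antidiagonal_eq_sum_range_succ_mk]
  refine sum_congr rfl fun i _ => ?_
  ext y
  simp [mul_assoc]

theorem norm_sum_antidiagonal_mulLeftRight_pow_le [NormOneClass 𝔸] (n : ℕ) (x : 𝔸) :
    ‖∑ p ∈ antidiagonal n, mulLeftRight 𝕂 𝔸 (x ^ p.1) (x ^ p.2)‖ ≤ (n + 1) * ‖x‖ ^ n := by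
  calc _ ≤ ∑ _p ∈ antidiagonal n, ‖x‖ ^ n := norm_sum_le_of_le _ fun p hp => ?_
    _ = _ := by simp
  obtain rfl := mem_antidiagonal.mp hp
  calc _ ≤ ‖x ^ p.1‖ * ‖x ^ p.2‖ := ContinuousLinearMap.opNorm_mulLeftRight_apply_apply_le ..
    _ ≤ ‖x‖ ^ p.1 * ‖x‖ ^ p.2 := by gcongr <;> exact norm_pow_le _ _
    _ = _ := (pow_add ..).symm

theorem hasFDerivAt_exp_eq_tsum_mulLeftRight [NormOneClass 𝔸] [CompleteSpace 𝔸] (x : 𝔸) :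
    HasFDerivAt exp
      (∑' n, ((n + 1)! : 𝕂)⁻¹ • ∑ p ∈ antidiagonal n, mulLeftRight 𝕂 𝔸 (x ^ p.1) (x ^ p.2)) x := by
  set r := ‖x‖ + 1
  have hx : x ∈ Metric.ball 0 r := by simp [r]
  have hbound (n : ℕ) (y : 𝔸) (hy : y ∈ Metric.ball 0 r) :
      ‖((n + 1)! : 𝕂)⁻¹ • ∑ p ∈ antidiagonal n, mulLeftRight 𝕂 𝔸 (y ^ p.1) (y ^ p.2)‖ ≤
        r ^ n / n ! := by
    calc _ = ((n + 1)! : ℝ)⁻¹ *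
          ‖∑ p ∈ antidiagonal n, mulLeftRight 𝕂 𝔸 (y ^ p.1) (y ^ p.2)‖ := by
          rw [norm_smul, norm_inv, RCLike.norm_natCast]
      _ ≤ ((n + 1)! : ℝ)⁻¹ * ((n + 1) * r ^ n) := by
          gcongr
          refine (norm_sum_antidiagonal_mulLeftRight_pow_le n y).trans ?_
          gcongr
          exact (mem_ball_zero_iff.mp hy).le
      _ = r ^ n / n ! := by
          rw [Nat.factorial_succ]
          push_cast
          field_simp
  -- balls are preconnected by convexity over `ℝ`
  let : NormedSpace ℝ 𝔸 := NormedSpace.restrictScalars ℝ 𝕂 𝔸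
  rw [funext (exp_eq_one_add_tsum (𝕂 := 𝕂))]
  exact (hasFDerivAt_tsum_of_isPreconnected (Real.summable_pow_div_factorial r) Metric.isOpen_ball
    Metric.isPreconnected_ball
    (fun n y _ => (hasFDerivAt_pow_succ_eq_sum_mulLeftRight n y).const_smul _) hbound hx
    ((summable_nat_add_iff 1).mpr (expSeries_summable' x)) hx).const_add 1

theorem ContinuousLinearMap.mulLeftRight_pow_pow (x : 𝔸) (i j : ℕ) :
    mulLeftRight 𝕂 𝔸 (x ^ i) (x ^ j) = mul 𝕂 𝔸 x ^ i * (mul 𝕂 𝔸).flip x ^ j := by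
  have hleft : ⇑(mul 𝕂 𝔸 x) = (x * ·) := by ext; simp
  have hright : ⇑((mul 𝕂 𝔸).flip x) = (· * x) := by ext; simp
  ext z
  simp [hleft, hright, mul_left_iterate, mul_right_iterate, mul_assoc]

theorem ContinuousLinearMap.commute_mul_flip_mul (x y : 𝔸) :
    Commute (mul 𝕂 𝔸 x) ((mul 𝕂 𝔸).flip y) := by
  ext z
  simp [mul_assoc]

theorem ContinuousLinearMap.exp_mul_eq_mul_exp [CompleteSpace 𝔸] (x : 𝔸) :
    exp (mul 𝕂 𝔸 x) = mul 𝕂 𝔸 (exp x) := by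
  let mulHom : 𝔸 →+* 𝔸 →L[𝕂] 𝔸 :=
    { toFun := mul 𝕂 𝔸
      map_one' := by ext; simp
      map_mul' _ _ := by ext; simp [mul_assoc]
      map_zero' := map_zero _
      map_add' := map_add _ }
  refine (map_exp_of_mem_ball (𝕂 := 𝕂) mulHom (mul 𝕂 𝔸).continuous x ?_).symm
  rw [expSeries_radius_eq_top]
  exact edist_lt_top _ _

theorem fderiv_exp_apply_eq_tsum [NormOneClass 𝔸] [CompleteSpace 𝔸] (x y : 𝔸) :
    fderiv 𝕂 exp x y =
      ∑' k, ((k + 1)! : 𝕂)⁻¹ • (((mul 𝕂 𝔸).flip x - mul 𝕂 𝔸 x) ^ k) (exp x * y) := by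
  set D := (mul 𝕂 𝔸).flip x - mul 𝕂 𝔸 x
  have hcomm : Commute (mul 𝕂 𝔸 x) D :=
    (ContinuousLinearMap.commute_mul_flip_mul x x).sub_right (Commute.refl _)
  have hderiv : fderiv 𝕂 exp x = (∑' k, ((k + 1)! : 𝕂)⁻¹ • D ^ k) * mul 𝕂 𝔸 (exp x) := by
    rw [← ContinuousLinearMap.exp_mul_eq_mul_exp,
      ← hcomm.tsum_smul_sum_antidiagonal_pow_mul_add_pow, add_sub_cancel,
      (hasFDerivAt_exp_eq_tsum_mulLeftRight x).fderiv]
    simp only [ContinuousLinearMap.mulLeftRight_pow_pow]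
  have hsummable : Summable fun k => ((k + 1)! : 𝕂)⁻¹ • D ^ k :=
    (summable_norm_inv_factorial_succ_smul_pow D).of_norm
  rw [hderiv]
  simpa using (ContinuousLinearMap.apply 𝕂 𝔸 (exp x * y)).map_tsum hsummable

end Derivative

theorem flip_mul_sub_mul_pow_apply (m : ℕ) (A Y : Matrix (Fin m) (Fin m) ℝ) (k : ℕ) :
    (((ContinuousLinearMap.mul ℝ (Matrix (Fin m) (Fin m) ℝ)).flip A -
      ContinuousLinearMap.mul ℝ _ A) ^ k) Y = ((-adAction m A) ^ k) Y := by
  have h : ((ContinuousLinearMap.mul ℝ (Matrix (Fin m) (Fin m) ℝ)).flip A -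
      ContinuousLinearMap.mul ℝ _ A).toLinearMap = -adAction m A := by
    ext Y : 1
    simp [adAction]
  rw [← h, ← ContinuousLinearMap.toLinearMap_pow]
  rfl

/-- Series formula for the differential of the matrix exponential:
`(d exp)_A X = ∑_{k=0}^∞ (1/(k+1)!) • ((-ad A)^k) (exp A * X)`. -/
theorem statement10 (m : ℕ) (A X : Matrix (Fin m) (Fin m) ℝ) :
    fderiv ℝ (NormedSpace.exp) A X =
      ∑' k : ℕ, (((k + 1).factorial : ℝ))⁻¹ •
        ((-adAction m A) ^ k) (NormedSpace.exp A * X) := by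
  -- the linfty operator norm is a `NormOneClass` only for a nonempty index type
  rcases isEmpty_or_nonempty (Fin m) with hm | hm
  · exact Subsingleton.elim _ _
  exact (fderiv_exp_apply_eq_tsum A X).trans
    (tsum_congr fun k => congrArg (_ • ·) (flip_mul_sub_mul_pow_apply m A _ k))
end

section
/- (Recurrence structure for the gradient with respect to intermediate states.) Fix m, N ∈ ℕ, matrices E_1, …, E_N ∈ Matrix (Fin m) (Fin m) ℝ, and define z_0 := 1 and z_k := z_{k−1} * E_k for 1 ≤ k ≤ N. Let ψ : (Matrix (Fin m) (Fin m) ℝ)^{N+1} → ℝ be differentiable at (z_0, …, z_N). For 0 ≤ n ≤ N define ψ̃_n : Matrix (Fin m) (Fin m) ℝ → ℝ by ψ̃_n(w) := ψ(z_0, …, z_{n−1}, w, w*E_{n+1}, w*E_{n+1}*E_{n+2}, …, w*E_{n+1}*⋯*E_N). Then for every 0 ≤ n < N and every ξ ∈ Matrix (Fin m) (Fin m) ℝ: fderiv ℝ ψ̃_n (z_n) (ξ) = (partial derivative of ψ at (z_0, …, z_N) in the n-th coordinate, applied to ξ) + fderiv ℝ ψ̃_{n+1} (z_{n+1}) (ξ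 * E_{n+1}). -/
attribute [local instance] Matrix.linftyOpNormedAddCommGroup Matrix.linftyOpNormedRing
  Matrix.linftyOpNormedAlgebra

/-- The intermediate states `z_0 = 1`, `z_k = z_{k-1} * E_k` built from the update
factors `E_1, E_2, …`. -/
noncomputable def interZ (m : ℕ) (E : ℕ → Matrix (Fin m) (Fin m) ℝ) :
    ℕ → Matrix (Fin m) (Fin m) ℝ
  | 0 => 1
  | k + 1 => interZ m E k * E (k + 1)

/-- `ψ̃_n (w) = ψ (z_0, …, z_{n-1}, w, w * E_{n+1}, w * E_{n+1} * E_{n+2}, …,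
w * E_{n+1} * ⋯ * E_N)`: the loss as a function of the `n`-th intermediate state, with all
later states recomputed from `w`. -/
noncomputable def psiTilde (m N : ℕ) (E : ℕ → Matrix (Fin m) (Fin m) ℝ)
    (ψ : (Fin (N + 1) → Matrix (Fin m) (Fin m) ℝ) → ℝ) (n : ℕ)
    (w : Matrix (Fin m) (Fin m) ℝ) : ℝ :=
  ψ (fun k => if (k : ℕ) < n then interZ m E k
      else w * ((List.range ((k : ℕ) - n)).map (fun j => E (n + 1 + j))).prod)

/-! `ψ̃_n` is `ψ` composed with the affine map `w ↦ (z_0, …, z_{n-1}, w, w E_{n+1}, …)`, whose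
linear part `L_n` splits as `L_n ξ = ι_n ξ + L_{n+1} (ξ E_{n+1})`, with `ι_n` the inclusion of the
`n`-th coordinate; the chain rule and linearity of `dψ` turn this splitting into the recurrence. -/

def updateProd {M : Type*} [Monoid M] (E : ℕ → M) (n d : ℕ) : M :=
  ((List.range d).map fun j => E (n + 1 + j)).prod

theorem updateProd_succ {M : Type*} [Monoid M] (E : ℕ → M) (n d : ℕ) :
    updateProd E n (d + 1) = E (n + 1) * updateProd E (n + 1) d := by
  rw [updateProd, List.range_succ_eq_map, List.map_cons, List.prod_cons, List.map_map,
    updateProd, add_zero]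
  congr 2
  exact List.map_congr_left fun j _ => congrArg E (by omega)

section States

variable {m N : ℕ} (E : ℕ → Matrix (Fin m) (Fin m) ℝ)

theorem interZ_mul_updateProd (n d : ℕ) :
    interZ m E n * updateProd E n d = interZ m E (n + d) := by
  induction d with
  | zero => simp [updateProd]
  | succ d ih =>
    rw [updateProd, List.range_succ, List.map_append, List.prod_append, ← updateProd,
      ← mul_assoc, ih]
    simp only [List.map_cons, List.map_nil, List.prod_cons, List.prod_nil, mul_one]
    rw [show n + 1 + d = n + d + 1 by omega]
    rfl

/-- `psiTilde m N E ψ n = ψ ∘ statesFrom E n` holds definitionally. -/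
noncomputable def statesFrom (n : ℕ) (w : Matrix (Fin m) (Fin m) ℝ) :
    Fin (N + 1) → Matrix (Fin m) (Fin m) ℝ :=
  fun k => if (k : ℕ) < n then interZ m E k else w * updateProd E n (k - n)

theorem statesFrom_interZ (n : ℕ) :
    statesFrom (N := N) E n (interZ m E n) = fun k : Fin (N + 1) => interZ m E k := by
  funext k
  unfold statesFrom
  split_ifs with hk
  · rfl
  · rw [interZ_mul_updateProd, Nat.add_sub_cancel' (not_lt.1 hk)]

noncomputable def statesFromDeriv (n : ℕ) :
    Matrix (Fin m) (Fin m) ℝ →L[ℝ] (Fin (N + 1) → Matrix (Fin m) (Fin m) ℝ) :=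
  ContinuousLinearMap.pi fun k =>
    if (k : ℕ) < n then 0
    else (ContinuousLinearMap.mul ℝ (Matrix (Fin m) (Fin m) ℝ)).flip (updateProd E n (k - n))

theorem statesFromDeriv_apply (n : ℕ) (ξ : Matrix (Fin m) (Fin m) ℝ) (k : Fin (N + 1)) :
    statesFromDeriv E n ξ k = if (k : ℕ) < n then 0 else ξ * updateProd E n (k - n) := by
  by_cases hk : (k : ℕ) < n
  · simp [statesFromDeriv, hk]
  · simp [statesFromDeriv, hk]
    rfl

theorem hasFDerivAt_statesFrom (n : ℕ) (w : Matrix (Fin m) (Fin m) ℝ) :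
    HasFDerivAt (statesFrom (N := N) E n) (statesFromDeriv E n) w := by
  refine hasFDerivAt_pi.2 fun k => ?_
  by_cases hk : (k : ℕ) < n
  · simp only [statesFrom, hk, ↓reduceIte]
    exact hasFDerivAt_const _ _
  · simp only [statesFrom, hk, ↓reduceIte]
    exact ((ContinuousLinearMap.mul ℝ (Matrix (Fin m) (Fin m) ℝ)).flip _).hasFDerivAt

theorem statesFromDeriv_eq_single_add {n : ℕ} (hn : n < N + 1) (ξ : Matrix (Fin m) (Fin m) ℝ) :
    statesFromDeriv E n ξ =
      Pi.single ⟨n, hn⟩ ξ + statesFromDeriv (N := N) E (n + 1) (ξ * E (n + 1)) := by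
  funext k
  simp only [Pi.add_apply, statesFromDeriv_apply, Pi.single_apply, Fin.ext_iff]
  rcases lt_trichotomy (k : ℕ) n with h | rfl | h
  · simp [h, h.ne, h.trans n.lt_succ_self]
  · simp [updateProd]
  · obtain ⟨d, hd⟩ : ∃ d, (k : ℕ) = n + 1 + d := ⟨k - (n + 1), by omega⟩
    rw [if_neg (by omega), if_neg (by omega), if_neg (by omega), hd,
      show n + 1 + d - n = d + 1 by omega, Nat.add_sub_cancel_left, updateProd_succ,
      mul_assoc, zero_add]

theorem hasFDerivAt_psiTilde (ψ : (Fin (N + 1) → Matrix (Fin m) (Fin m) ℝ) → ℝ)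
    (hψ : DifferentiableAt ℝ ψ (fun k => interZ m E k)) (n : ℕ) :
    HasFDerivAt (psiTilde m N E ψ n)
      ((fderiv ℝ ψ (fun k => interZ m E k)).comp (statesFromDeriv E n)) (interZ m E n) := by
  have hψ' : HasFDerivAt ψ (fderiv ℝ ψ (fun k => interZ m E k))
      (statesFrom E n (interZ m E n)) := by
    rw [statesFrom_interZ]
    exact hψ.hasFDerivAt
  exact hψ'.comp _ (hasFDerivAt_statesFrom E n _)

end States

/-- Recurrence structure for the gradient with respect to the intermediate states:
`(d ψ̃_n)_{z_n} ξ = (∂_n ψ)_{(z_0,…,z_N)} ξ + (d ψ̃_{n+1})_{z_{n+1}} (ξ * E_{n+1})`,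
where the partial derivative in the `n`-th coordinate is the Fréchet derivative of `ψ`
precomposed with the inclusion of the `n`-th coordinate. -/
theorem statement14 (m N : ℕ) (E : ℕ → Matrix (Fin m) (Fin m) ℝ)
    (ψ : (Fin (N + 1) → Matrix (Fin m) (Fin m) ℝ) → ℝ)
    (hψ : DifferentiableAt ℝ ψ (fun k => interZ m E (k : ℕ)))
    (n : ℕ) (hn : n < N) (ξ : Matrix (Fin m) (Fin m) ℝ) :
    fderiv ℝ (psiTilde m N E ψ n) (interZ m E n) ξ =
      fderiv ℝ ψ (fun k => interZ m E (k : ℕ))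
        (Pi.single (⟨n, by omega⟩ : Fin (N + 1)) ξ) +
      fderiv ℝ (psiTilde m N E ψ (n + 1)) (interZ m E (n + 1)) (ξ * E (n + 1)) := by
  rw [(hasFDerivAt_psiTilde E ψ hψ n).fderiv, (hasFDerivAt_psiTilde E ψ hψ (n + 1)).fderiv,
    ContinuousLinearMap.comp_apply, ContinuousLinearMap.comp_apply, ← map_add,
    ← statesFromDeriv_eq_single_add]
end
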